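/- Hermite's constants satisfy γ_n := max{C_1, ..., C_n} ≤ 1 + n/4, where C_j = sup { λ_1(L)² / (det L)^{2/j} : L a lattice of rank j } and λ_1(L) is the Euclidean length of a shortest nonzero vector of L. -/

import Mathlib

/-- The Gram-Schmidt orthogonalization of a finite family of vectors. -/
noncomputable def gsE {E : Type*} [NormedAddCommGroup E] [InnerProductSpace ℝ E] {r : ℕ}
    (c : Fin r → E) : Fin r → E :=
  haveI : WellFoundedLT (Fin r) := inferInstance
  InnerProductSpace.gramSchmidt ℝ c

/-- The lattice generated by a family of vectors: all integer combinations. -/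
noncomputable def latE {E : Type*} [NormedAddCommGroup E] [InnerProductSpace ℝ E] {r : ℕ}
    (c : Fin r → E) : AddSubgroup E :=
  AddSubgroup.closure (Set.range c)

/-- The length of a shortest nonzero vector of the lattice generated by `c`. -/
noncomputable def lambda1 {E : Type*} [NormedAddCommGroup E] [InnerProductSpace ℝ E] {r : ℕ}
    (c : Fin r → E) : ℝ :=
  sInf { t | ∃ v ∈ latE c, v ≠ 0 ∧ ‖v‖ = t }

/-- The determinant of the lattice with basis `c` : the square root of the
Gram determinant of `c`. -/
noncomputable def latDet {E : Type*} [NormedAddCommGroup E] [InnerProductSpace ℝ E] {r : ℕ}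
    (c : Fin r → E) : ℝ :=
  Real.sqrt (Matrix.det (Matrix.of fun i j : Fin r => (inner ℝ (c i) (c j) : ℝ)))

/-- Hermite's constant of rank `j`. -/
noncomputable def hermiteC (j : ℕ) : ℝ :=
  sSup { t | ∃ c : Fin j → EuclideanSpace ℝ (Fin j), LinearIndependent ℝ c ∧
    t = lambda1 c ^ 2 / latDet c ^ ((2 : ℝ) / j) }

/-- `γ_j = max {C_1, ..., C_j}`. -/
noncomputable def gammaH (j : ℕ) : ℝ := sSup (hermiteC '' Set.Icc 1 j)

/-- Projection onto the orthogonal complement of the span of a set. -/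
noncomputable def projPerp {E : Type*} [NormedAddCommGroup E] [InnerProductSpace ℝ E]
    [FiniteDimensional ℝ E] (S : Set E) (v : E) : E :=
  (Submodule.orthogonalProjectionOnto (Submodule.span ℝ S)ᗮ v : E)

/-- A family `c_0, ..., c_{r-1}` is Korkhine-Zolotarev reduced if for each `i`, the projection
`c_i(i)` of `c_i` onto the orthogonal complement of `span(c_0, ..., c_{i-1})` is a shortest
nonzero vector of the lattice generated by the projections of the `c_j` onto that complement. -/
def KZReduced {E : Type*} [NormedAddCommGroup E] [InnerProductSpace ℝ E]
    [FiniteDimensional ℝ E] {r : ℕ} (c : Fin r → E) : Prop :=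
  ∀ i : Fin r,
    ∀ v ∈ latE (fun j => projPerp (c '' { j : Fin r | j < i }) (c j)),
      v ≠ 0 → ‖projPerp (c '' { j : Fin r | j < i }) (c i)‖ ≤ ‖v‖

/-- A basis `b_0, ..., b_{r-1}` of a lattice is RKZ reduced if its reciprocal basis
(the unique family `b'` in the span with `⟨b_i, b'_j⟩ = 1` if `i + j = r + 1` (1-indexed)
and `0` otherwise) is Korkhine-Zolotarev reduced. -/
def RKZReduced {E : Type*} [NormedAddCommGroup E] [InnerProductSpace ℝ E]
    [FiniteDimensional ℝ E] {r : ℕ} (b : Fin r → E) : Prop :=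
  ∃ b' : Fin r → E,
    (∀ j, b' j ∈ Submodule.span ℝ (Set.range b)) ∧
    (∀ i j : Fin r, (inner ℝ (b i) (b' j) : ℝ) =
      if (i : ℕ) + (j : ℕ) + 1 = r then 1 else 0) ∧
    KZReduced b'

/-!
Minkowski's convex body theorem for the closed ball of radius `R` with `R ^ j ω_j = 2 ^ j det L`,
where `ω_j = π ^ (j/2) / Γ(j/2 + 1)` is the volume of the unit ball, gives
`λ₁(L) ^ j ω_j ≤ 2 ^ j det L`. Hence `λ₁² / (det L) ^ (2/j) ≤ 1 + j/4` as soon as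
`16 ^ j Γ(j/2 + 1)² ≤ (π (j + 4)) ^ j`. This holds for `j = 0, 1`, and passing from `j` to `j + 2`
needs `64 (j + 2)² ≤ π² (j + 6)² ((j + 6)/(j + 4)) ^ j`, which follows from
`((j + 6)/(j + 4)) ^ j ≥ exp (2j/(j + 5))` (as `log (1 + u) ≥ 2u/(u + 2)`) and a quartic Taylor
bound for `exp`.
-/

open MeasureTheory Module Real

section Gamma

lemma taylor_quartic_le_exp {t : ℝ} (ht : 0 ≤ t) :
    1 + t + t ^ 2 / 2 + t ^ 3 / 6 + t ^ 4 / 24 ≤ exp t := by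
  convert sum_le_exp_of_nonneg ht 5 using 1
  simp [Finset.sum_range_succ, Nat.factorial]

lemma exp_two_mul_div_le_pow (j : ℕ) :
    exp (2 * j / (j + 5)) ≤ (((j : ℝ) + 6) / (j + 4)) ^ j := by
  have hu : (0 : ℝ) ≤ 2 / (j + 4) := by positivity
  have hlog := le_log_one_add_of_nonneg hu
  have h1 : ((j : ℝ) + 6) / (j + 4) = 1 + 2 / (j + 4) := by field_simp; ring
  have h2 : 2 * (2 / ((j : ℝ) + 4)) / (2 / (j + 4) + 2) = 2 / (j + 5) := by field_simp; ring
  rw [h1, ← exp_log (by positivity : (0 : ℝ) < 1 + 2 / (j + 4)), ← exp_nat_mul]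
  gcongr
  rw [h2] at hlog
  calc 2 * (j : ℝ) / (j + 5) = j * (2 / (j + 5)) := by ring
    _ ≤ _ := by gcongr

lemma sixtyFour_mul_add_two_sq_le (j : ℕ) :
    64 * ((j : ℝ) + 2) ^ 2 ≤ π ^ 2 * (j + 6) ^ 2 * (((j : ℝ) + 6) / (j + 4)) ^ j := by
  set x : ℝ := (j : ℝ)
  have hx : 0 ≤ x := Nat.cast_nonneg j
  have hpi : 985 / 100 ≤ π ^ 2 := by nlinarith [pi_gt_d2]
  -- As `j → ∞` the quartic Taylor polynomial at `2j/(j + 5) → 2` tends to `7 > 64/π² ≈ 6.49`,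
  -- whereas the cubic one only reaches `19/3`.
  have hpoly : 1536 * (x + 2) ^ 2 * (x + 5) ^ 4 ≤ 985 / 100 * (x + 6) ^ 2 *
      (24 * (x + 5) ^ 4 + 48 * x * (x + 5) ^ 3 + 48 * x ^ 2 * (x + 5) ^ 2
        + 32 * x ^ 3 * (x + 5) + 16 * x ^ 4) := by
    nlinarith [pow_nonneg hx 2, pow_nonneg hx 3, pow_nonneg hx 4, pow_nonneg hx 5,
      pow_nonneg hx 6]
  have htaylor : 1 + 2 * x / (x + 5) + (2 * x / (x + 5)) ^ 2 / 2 + (2 * x / (x + 5)) ^ 3 / 6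
      + (2 * x / (x + 5)) ^ 4 / 24 = (24 * (x + 5) ^ 4 + 48 * x * (x + 5) ^ 3
        + 48 * x ^ 2 * (x + 5) ^ 2 + 32 * x ^ 3 * (x + 5) + 16 * x ^ 4) / (24 * (x + 5) ^ 4) := by
    field_simp; ring
  calc 64 * (x + 2) ^ 2
      ≤ 985 / 100 * (x + 6) ^ 2 * ((24 * (x + 5) ^ 4 + 48 * x * (x + 5) ^ 3
        + 48 * x ^ 2 * (x + 5) ^ 2 + 32 * x ^ 3 * (x + 5) + 16 * x ^ 4) / (24 * (x + 5) ^ 4)) := by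
        rw [mul_div_assoc', le_div_iff₀ (by positivity)]
        linarith
    _ ≤ π ^ 2 * (x + 6) ^ 2 * exp (2 * x / (x + 5)) := by
        rw [← htaylor]
        gcongr
        exact taylor_quartic_le_exp (by positivity)
    _ ≤ π ^ 2 * (x + 6) ^ 2 * ((x + 6) / (x + 4)) ^ j := by
        gcongr
        exact exp_two_mul_div_le_pow j

theorem Gamma_sq_mul_sixteen_pow_le (j : ℕ) :
    Gamma (j / 2 + 1) ^ 2 * 16 ^ j ≤ (π * (j + 4)) ^ j := by
  induction j using Nat.twoStepInduction with
  | zero => simp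
  | one =>
    rw [Nat.cast_one, Gamma_add_one (by norm_num), Gamma_one_half_eq, mul_pow, div_pow,
      sq_sqrt pi_pos.le]
    nlinarith [pi_pos]
  | more j ih _ =>
    have hΓ : Gamma ((j + 2 : ℕ) / 2 + 1) = ((j : ℝ) / 2 + 1) * Gamma (j / 2 + 1) := by
      rw [← Gamma_add_one (by positivity)]
      push_cast
      ring_nf
    have hstep := sixtyFour_mul_add_two_sq_le j
    calc Gamma ((j + 2 : ℕ) / 2 + 1) ^ 2 * 16 ^ (j + 2)
        = 64 * ((j : ℝ) + 2) ^ 2 * (Gamma (j / 2 + 1) ^ 2 * 16 ^ j) := by rw [hΓ]; ring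
      _ ≤ π ^ 2 * (j + 6) ^ 2 * (((j : ℝ) + 6) / (j + 4)) ^ j * (π * (j + 4)) ^ j := by
        gcongr
      _ = (π * ((j + 2 : ℕ) + 4)) ^ (j + 2) := by
        have hmul : ((j : ℝ) + 6) / (j + 4) * (π * (j + 4)) = π * (j + 6) := by field_simp
        rw [mul_assoc, ← mul_pow _ _ j, hmul]
        push_cast
        ring

end Gamma

section Lattice

variable {E : Type*} [NormedAddCommGroup E] [InnerProductSpace ℝ E] {r : ℕ}

lemma latDet_eq_abs_det (b₀ : OrthonormalBasis (Fin r) ℝ E) (c : Fin r → E) :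
    latDet c = |b₀.toBasis.det c| := by
  rw [latDet, ← Matrix.gram, Matrix.gram_eq_conjTranspose_mul b₀ c, Matrix.det_mul,
    Matrix.det_conjTranspose, star_trivial]
  exact sqrt_mul_self_eq_abs _

lemma latDet_pos {c : Fin r → E} (hc : LinearIndependent ℝ c) : 0 < latDet c :=
  sqrt_pos.2 (Matrix.posDef_gram_of_linearIndependent hc).det_pos

lemma lambda1_nonneg (c : Fin r → E) : 0 ≤ lambda1 c :=
  Real.sInf_nonneg fun _ ⟨v, _, _, hv⟩ => hv ▸ norm_nonneg v

lemma lambda1_le_norm {c : Fin r → E} {v : E} (hv : v ∈ latE c) (h0 : v ≠ 0) :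
    lambda1 c ≤ ‖v‖ :=
  csInf_le ⟨0, fun _ ⟨w, _, _, hw⟩ => hw ▸ norm_nonneg w⟩ ⟨v, hv, h0, rfl⟩

lemma Module.Basis.fin_ne_zero [Nontrivial E] (b : Basis (Fin r) ℝ E) : r ≠ 0 :=
  (Fin.pos_iff_nonempty.2 b.index_nonempty).ne'

variable [FiniteDimensional ℝ E]

section Measure

variable [MeasurableSpace E] [BorelSpace E]

lemma volume_fundamentalDomain_eq_latDet (b : Basis (Fin r) ℝ E) :
    volume (ZSpan.fundamentalDomain b) = ENNReal.ofReal (latDet b) := by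
  let b₀ := (stdOrthonormalBasis ℝ E).reindex ((stdOrthonormalBasis ℝ E).toBasis.indexEquiv b)
  rw [ZSpan.measure_fundamentalDomain b volume b₀.toBasis,
    measure_congr (ZSpan.fundamentalDomain_ae_parallelepiped b₀.toBasis volume),
    OrthonormalBasis.coe_toBasis, b₀.volume_parallelepiped, mul_one, latDet_eq_abs_det b₀]

lemma exists_mem_latE_ne_zero_norm_le [Nontrivial E] (b : Basis (Fin r) ℝ E) {R : ℝ}
    (hR : 0 ≤ R) (h : 2 ^ r * latDet b ≤ R ^ r * (√π ^ r / Gamma (r / 2 + 1))) :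
    ∃ v ∈ latE b, v ≠ 0 ∧ ‖v‖ ≤ R := by
  have hlat : latE b = (Submodule.span ℤ (Set.range b)).toAddSubgroup := by
    rw [latE, Submodule.span_int_eq_addSubgroupClosure]
  have hfund : IsAddFundamentalDomain (latE b) (ZSpan.fundamentalDomain b) volume := by
    rw [hlat]; exact ZSpan.isAddFundamentalDomain' b volume
  have : DiscreteTopology (latE b) := by rw [hlat]; infer_instance
  have : Countable (latE b) := by
    rw [hlat]; exact inferInstanceAs (Countable (Submodule.span ℤ (Set.range b)))
  have hr : finrank ℝ E = r := by simp [finrank_eq_card_basis b]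
  obtain ⟨v, hv0, hvR⟩ := exists_ne_zero_mem_lattice_of_measure_mul_two_pow_le_measure hfund
    (fun _ hx => by simpa using hx) (convex_closedBall 0 R) (isCompact_closedBall 0 R) (by
      rw [volume_fundamentalDomain_eq_latDet, InnerProductSpace.volume_closedBall, hr,
        ← ENNReal.ofReal_pow hR, ← ENNReal.ofReal_mul (by positivity),
        ← ENNReal.ofReal_ofNat, ← ENNReal.ofReal_pow (by norm_num),
        ← ENNReal.ofReal_mul (latDet_pos b.linearIndependent).le, mul_comm]
      exact ENNReal.ofReal_le_ofReal h)
  exact ⟨v, v.2, by simpa using hv0, by simpa using hvR⟩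

lemma lambda1_pow_mul_le [Nontrivial E] (b : Basis (Fin r) ℝ E) :
    lambda1 b ^ r * (√π ^ r / Gamma (r / 2 + 1)) ≤ 2 ^ r * latDet b := by
  set ω := √π ^ r / Gamma (r / 2 + 1)
  have hω : 0 < ω := by
    have := Gamma_pos_of_pos (by positivity : (0 : ℝ) < r / 2 + 1)
    have := sqrt_pos.2 pi_pos
    positivity
  have hD := latDet_pos b.linearIndependent
  set R := (2 ^ r * latDet b / ω) ^ (r⁻¹ : ℝ)
  have hRr : R ^ r = 2 ^ r * latDet b / ω := rpow_inv_natCast_pow (by positivity) b.fin_ne_zero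
  obtain ⟨v, hv, hv0, hvR⟩ := exists_mem_latE_ne_zero_norm_le b (R := R) (by positivity)
    (by rw [hRr, div_mul_cancel₀ _ hω.ne'])
  calc lambda1 b ^ r * ω ≤ R ^ r * ω := by
        gcongr
        · exact lambda1_nonneg b
        exact (lambda1_le_norm hv hv0).trans hvR
      _ = 2 ^ r * latDet b := by rw [hRr, div_mul_cancel₀ _ hω.ne']

end Measure

theorem lambda1_sq_div_latDet_rpow_le [Nontrivial E] (b : Basis (Fin r) ℝ E) :
    lambda1 b ^ 2 / latDet b ^ ((2 : ℝ) / r) ≤ 1 + r / 4 := by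
  borelize E
  set ω := √π ^ r / Gamma (r / 2 + 1)
  have hD := latDet_pos b.linearIndependent
  have hΓ := Gamma_pos_of_pos (by positivity : (0 : ℝ) < r / 2 + 1)
  have hω : 0 < ω := by have := sqrt_pos.2 pi_pos; positivity
  have hminkowski : lambda1 b ^ r ≤ 2 ^ r * latDet b / ω := (le_div_iff₀ hω).2 (lambda1_pow_mul_le b)
  have hωsq : 16 ^ r ≤ ((r : ℝ) + 4) ^ r * ω ^ 2 := by
    rw [div_pow, ← pow_mul, mul_comm r, pow_mul, sq_sqrt pi_pos.le, mul_div_assoc', ← mul_pow,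
      le_div_iff₀ (by positivity), mul_comm, mul_comm _ π]
    exact Gamma_sq_mul_sixteen_pow_le r
  have hDr : (latDet b ^ ((2 : ℝ) / r)) ^ r = latDet b ^ 2 := by
    rw [← rpow_natCast, ← rpow_mul hD.le, div_mul_cancel₀ _ (Nat.cast_ne_zero.2 b.fin_ne_zero)]
    norm_num
  rw [div_le_iff₀ (by positivity), ← pow_le_pow_iff_left₀ (by positivity) (by positivity)
    b.fin_ne_zero]
  calc (lambda1 b ^ 2) ^ r = (lambda1 b ^ r) ^ 2 := by ring
    _ ≤ (2 ^ r * latDet b / ω) ^ 2 := by gcongr; exact pow_nonneg (lambda1_nonneg b) r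
    _ = 4 ^ r * latDet b ^ 2 * (1 / ω ^ 2) := by
        rw [div_pow, mul_pow, ← pow_mul, mul_comm r 2, pow_mul]; norm_num; ring
    _ ≤ 4 ^ r * latDet b ^ 2 * ((r + 4) ^ r / 16 ^ r) := by
        gcongr 4 ^ r * latDet b ^ 2 * ?_
        rw [div_le_div_iff₀ (by positivity) (by positivity)]
        linarith
    _ = ((1 + r / 4) * latDet b ^ ((2 : ℝ) / r)) ^ r := by
        rw [mul_pow, hDr, show (1 + (r : ℝ) / 4) = (r + 4) / 4 by ring, div_pow,
          show (16 : ℝ) ^ r = 4 ^ r * 4 ^ r by rw [← mul_pow]; norm_num]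
        field_simp

end Lattice

theorem hermiteC_le {j : ℕ} (hj : 1 ≤ j) : hermiteC j ≤ 1 + j / 4 := by
  refine Real.sSup_le ?_ (by positivity)
  rintro _ ⟨c, hc, rfl⟩
  have : Nonempty (Fin j) := ⟨⟨0, hj⟩⟩
  have hcard : Fintype.card (Fin j) = finrank ℝ (EuclideanSpace ℝ (Fin j)) := by simp
  simpa using lambda1_sq_div_latDet_rpow_le (basisOfLinearIndependentOfCardEqFinrank hc hcard)

/-- Hermite's constants satisfy `γ_n = max {C_1, ..., C_n} ≤ 1 + n/4`. -/
theorem gammaH_le (n : ℕ) : gammaH n ≤ 1 + (n : ℝ) / 4 := by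
  refine Real.sSup_le ?_ (by positivity)
  rintro _ ⟨j, hj, rfl⟩
  calc hermiteC j ≤ 1 + j / 4 := hermiteC_le hj.1
    _ ≤ 1 + n / 4 := by gcongr; exact_mod_cast hj.2
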